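/- Let φ be a real generalized Killing spinor on a time-oriented semi-Riemannian spin^c manifold of odd index with Killing endomorphism A, and suppose the Dirac current V_φ has nowhere vanishing norm. Then the Weingarten map of each leaf of the foliation V_φ^⊥ with respect to the unit normal Ẽ = V_φ/|V_φ| is given by W^{Ẽ}(X) = −β̃ (A(X) − ε g(A(X), Ẽ) Ẽ), where β̃ = c β/|V_φ| with β = ⟨φ,φ⟩, ε = sign g(V_φ,V_φ), and c the constant with ∇_X V_φ = cβ A(X). -/
import Mathlib


/-- Let `φ` be a real generalized Killing spinor whose Dirac current `V` satisfies
`∇_X V = cβ A(X)` (with `β = ⟨φ,φ⟩`) and has nowhere vanishing norm. Then the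
Weingarten map of each leaf of the foliation `V^⊥` with respect to the unit normal
`Ẽ = V/|V|`, namely `W^Ẽ(X) = −(∇_X Ẽ)^⊥` (tangential part), is given by
`W^Ẽ(X) = −β̃ (A(X) − ε g(A(X),Ẽ) Ẽ)` where `β̃ = cβ/|V|` and `ε = sign g(V,V)`. -/
theorem weingarten_map_of_leaves_GKS
    {M E : Type*} [AddCommGroup E] [Module ℝ E]
    (gE : E → E → ℝ)
    (hgsymm : ∀ x y, gE x y = gE y x)
    (hgaddl : ∀ x x' y, gE (x + x') y = gE x y + gE x' y)
    (hgsmul : ∀ (c : ℝ) x y, gE (c • x) y = c * gE x y)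
    (nabla : (M → E) → (M → E) → (M → E))
    (D : (M → E) → (M → ℝ) → (M → ℝ))
    -- Leibniz rule and metric compatibility for the Levi-Civita connection
    (hLeib : ∀ (X : M → E) (f : M → ℝ) (Y : M → E) (p : M),
      (nabla X (fun q => f q • Y q)) p = (D X f) p • Y p + f p • (nabla X Y) p)
    (hcompat : ∀ (X Y Z : M → E) (p : M),
      (D X (fun q => gE (Y q) (Z q))) p
        = gE ((nabla X Y) p) (Z p) + gE (Y p) ((nabla X Z) p))
    (V : M → E) (A : M → E → E) (c : ℝ) (β : M → ℝ)
    (hAsym : ∀ (p : M) (x y : E), gE (A p x) y = gE x (A p y))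
    -- ∇_X V = cβ A(X), as provided by the generalized Killing spinor φ with β = ⟨φ,φ⟩
    (hV : ∀ (X : M → E) (p : M), (nabla X V) p = (c * β p) • A p (X p))
    -- |V| is nowhere vanishing
    (hnz : ∀ p : M, gE (V p) (V p) ≠ 0)
    (nv : M → ℝ) (hnv : nv = fun p => Real.sqrt |gE (V p) (V p)|)
    (Et : M → E) (hEt : Et = fun p => (nv p)⁻¹ • V p)
    -- ε = sign g(V,V)
    (εs : M → ℝ) (hεs : εs = fun p => if 0 < gE (V p) (V p) then 1 else -1)
    -- the Weingarten map W^Ẽ(X) = −(∇_X Ẽ)^⊥ (tangential part w.r.t. Ẽ)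
    (Wg : (M → E) → M → E)
    (hW : ∀ (X : M → E) (p : M),
      Wg X p = -((nabla X Et) p - (εs p * gE ((nabla X Et) p) (Et p)) • Et p)) :
    ∀ (X : M → E) (p : M),
      Wg X p = -(c * β p / nv p) •
        (A p (X p) - (εs p * gE (A p (X p)) (Et p)) • Et p) := by

  intro X p
  -- basic facts about nv and εs
  have hnvp : 0 < nv p := by
    rw [hnv]; exact Real.sqrt_pos.mpr (abs_pos.mpr (hnz p))
  have hnvne : nv p ≠ 0 := ne_of_gt hnvp
  have hnvsq : nv p * nv p = |gE (V p) (V p)| := by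
    rw [hnv]; exact Real.mul_self_sqrt (abs_nonneg _)
  have hVEt : V p = nv p • Et p := by
    rw [hEt]; simp [smul_smul, mul_inv_cancel₀ hnvne]
  have hEE : gE (Et p) (Et p) = εs p := by
    rw [hEt, hεs]
    simp only [hgsmul]
    rw [hgsymm, hgsmul]
    rcases lt_or_gt_of_ne (hnz p) with h | h
    · have habs : |gE (V p) (V p)| = -gE (V p) (V p) := abs_of_neg h
      rw [if_neg (not_lt.mpr h.le)]
      field_simp
      nlinarith [hnvsq]
    · have habs : |gE (V p) (V p)| = gE (V p) (V p) := abs_of_pos h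
      rw [if_pos h]
      field_simp
      nlinarith [hnvsq]
  have hεsq : εs p * εs p = 1 := by
    rw [hεs]; dsimp only; split <;> norm_num
  have hVEtg : gE (V p) (Et p) = nv p * εs p := by
    rw [hVEt, hgsmul, hEE]
  -- compute ∇_X Et
  set ap := (D X (fun q => (nv q)⁻¹)) p with hap
  have h1 : (nabla X Et) p = ap • V p + ((nv p)⁻¹ * (c * β p)) • A p (X p) := by
    calc (nabla X Et) p = (D X (fun q => (nv q)⁻¹)) p • V p + (nv p)⁻¹ • (nabla X V) p := by
          rw [hEt]; exact hLeib X (fun q => (nv q)⁻¹) V p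
      _ = ap • V p + ((nv p)⁻¹ * (c * β p)) • A p (X p) := by
          rw [hV X p, smul_smul]
  set b := (nv p)⁻¹ * (c * β p) with hb
  have hbdiv : c * β p / nv p = b := by
    rw [hb, div_eq_mul_inv, mul_comm]
  have hg1 : gE ((nabla X Et) p) (Et p)
      = ap * (nv p * εs p) + b * gE (A p (X p)) (Et p) := by
    rw [h1, hgaddl, hgsmul, hgsmul, hVEtg]
  rw [hW X p, hg1, h1, hbdiv]
  rw [hVEt]
  have : εs p * (ap * (nv p * εs p) + b * gE (A p (X p)) (Et p))
      = ap * nv p + εs p * (b * gE (A p (X p)) (Et p)) := by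
    linear_combination (ap * nv p) * hεsq
  rw [this]
  set G := gE (A p (X p)) (Et p)
  match_scalars <;> ring
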